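/- arXiv:2305.07259 — 2 statements merged into one kernel-verified Lean document; each statement's English description precedes it below -/
import Mathlib

section
/- (Lemma 2 of the paper) Let T* join T' and T'' by edge (v, v_j) and S = S' ∪ S'' with S'' nonempty, ℓ'' = dist(v_j, S''). Let w₁, w₂ ∈ V(T') satisfy dist(w₁,S) − dist(w₁,v) ≥ dist(w₂,S) − dist(w₂,v) and dist(w₂, S') ≥ dist(w₂, S''). Then dist(w₁,S) − dist(w₁,v) = dist(w₂,S) − dist(w₂,v) = ℓ'' + 1. -/
/-- Distance from a vertex to a set of vertices (∞ if the set is empty). -/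
noncomputable def setDist {V : Type*} (G : SimpleGraph V) (u : V) (S : Set V) : ℕ∞ :=
  ⨅ x ∈ S, G.edist u x

/-- The set of nearest neighbors of `u` in `S`. -/
def nearest {V : Type*} (G : SimpleGraph V) (S : Set V) (u : V) : Set V :=
  {x ∈ S | G.edist u x = setDist G u S}

/-- A vertex `u` is consistent in `(G, S)` if some nearest neighbor of `u` in `S`
has the same color as `u`. -/
def ConsistentAt {V : Type*} {k : ℕ} (G : SimpleGraph V) (c : V → Fin k) (S : Set V)
    (u : V) : Prop :=
  ∃ x ∈ nearest G S u, c x = c u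

/-- `S` is a consistent subset of the vertex-colored graph `(G, c)`. -/
def Consistent {V : Type*} {k : ℕ} (G : SimpleGraph V) (c : V → Fin k) (S : Set V) : Prop :=
  ∀ u, ConsistentAt G c S u

/-! Every path from `A` to `S''` crosses the bridge `v — vj`, so for `w ∈ A` the quantity
`dist(w, S'') - dist(w, v)` equals `dist(vj, S'') + 1`. Since `dist(w, S) ≤ dist(w, S'')`, this
bounds `dist(w, S) - dist(w, v)` for every `w ∈ A`, with equality at `w₂`, where `dist(w₂, S) = dist(w₂, S'')`;
the hypothesis on `w₁` then forces equality at `w₁` as well. -/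

section

variable {V : Type*} (G : SimpleGraph V)

theorem setDist_union (u : V) (S T : Set V) :
    setDist G u (S ∪ T) = setDist G u S ⊓ setDist G u T :=
  iInf_union

theorem setDist_eq_add_of_forall_edist_eq {w u : V} {T : Set V} (c : ℕ∞)
    (h : ∀ x ∈ T, G.edist w x = c + G.edist u x) :
    setDist G w T = c + setDist G u T := by
  rw [setDist, setDist, ENat.add_iInf₂]
  exact iInf_congr fun x => iInf_congr (h x)

end

theorem case1_update_general {V : Type*} (G : SimpleGraph V) (A B : Set V) (v vj : V)
    (hconn : G.Connected)
    (hlaw : ∀ w ∈ A, ∀ x ∈ B, G.edist w x = G.edist w v + 1 + G.edist vj x)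
    (S' S'' : Set V) (hS''B : S'' ⊆ B)
    (w1 w2 : V) (hw1 : w1 ∈ A) (hw2 : w2 ∈ A)
    (h12 : setDist G w2 (S' ∪ S'') - G.edist w2 v ≤
      setDist G w1 (S' ∪ S'') - G.edist w1 v)
    (h2 : setDist G w2 S'' ≤ setDist G w2 S') :
    setDist G w1 (S' ∪ S'') - G.edist w1 v = setDist G vj S'' + 1 ∧
      setDist G w2 (S' ∪ S'') - G.edist w2 v = setDist G vj S'' + 1 := by
  have through_bridge : ∀ w ∈ A, setDist G w S'' = G.edist w v + (setDist G vj S'' + 1) := by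
    intro w hw
    rw [add_comm _ 1, ← add_assoc]
    exact setDist_eq_add_of_forall_edist_eq G _ fun x hx => hlaw w hw x (hS''B hx)
  have bound : ∀ w ∈ A,
      setDist G w (S' ∪ S'') - G.edist w v ≤ setDist G vj S'' + 1 := by
    intro w hw
    rw [tsub_le_iff_left, ← through_bridge w hw, setDist_union]
    exact inf_le_right
  have at_w2 : setDist G w2 (S' ∪ S'') - G.edist w2 v = setDist G vj S'' + 1 := by
    have hfin : G.edist w2 v ≠ ⊤ := SimpleGraph.edist_ne_top_iff_reachable.mpr (hconn w2 v)
    rw [setDist_union, inf_eq_right.mpr h2, through_bridge w2 hw2,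
      (ENat.addLECancellable_of_ne_top hfin).add_tsub_cancel_left]
  exact ⟨le_antisymm (bound w1 hw1) (at_w2 ▸ h12), at_w2⟩

/-- Lemma 2 of the paper. -/
theorem case1_update {V : Type*} (G : SimpleGraph V) (A B : Set V) (v vj : V)
    (hconn : G.Connected)
    (hv : v ∈ A) (hvj : vj ∈ B) (hdisj : Disjoint A B) (hcover : A ∪ B = Set.univ)
    (hlaw : ∀ w ∈ A, ∀ x ∈ B, G.edist w x = G.edist w v + 1 + G.edist vj x)
    (S' S'' : Set V) (hS'A : S' ⊆ A) (hS''B : S'' ⊆ B) (hS'' : S''.Nonempty)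
    (w1 w2 : V) (hw1 : w1 ∈ A) (hw2 : w2 ∈ A)
    (h12 : setDist G w2 (S' ∪ S'') - G.edist w2 v ≤
      setDist G w1 (S' ∪ S'') - G.edist w1 v)
    (h2 : setDist G w2 S'' ≤ setDist G w2 S') :
    setDist G w1 (S' ∪ S'') - G.edist w1 v = setDist G vj S'' + 1 ∧
      setDist G w2 (S' ∪ S'') - G.edist w2 v = setDist G vj S'' + 1 :=
  case1_update_general G A B v vj hconn hlaw S' S'' hS''B w1 w2 hw1 hw2 h12 h2
end

section
/- (Left-inconsistency, case i ∈ H', i ∉ L'') Let T* join T' and T'' by edge (v, v_j), S = S' ∪ S''. Suppose w ∈ V(T')∩C_i is inconsistent in (T', S') and neither N(S', w) nor N(S'', v_j) contains a vertex of color i. Then w is inconsistent in (T*, S). -/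
/-! A nearest neighbour of `w` in `S' ∪ S''` lying in `S'` is a nearest neighbour in `S'`.
One lying in `S''` is a nearest neighbour of `v_j` in `S''`, because every distance from `w`
to `S''` is the corresponding distance from `v_j` plus the finite constant `dist(w, v) + 1`.
Either way a colour-`i` nearest neighbour contradicts a hypothesis. -/

namespace SimpleGraph

variable {V : Type*} {G : SimpleGraph V} {S T : Set V} {u x : V}

theorem mem_nearest_iff :
    x ∈ nearest G S u ↔ x ∈ S ∧ ∀ y ∈ S, G.edist u x ≤ G.edist u y := by
  refine and_congr_right fun hx => ⟨fun h y hy => h ▸ iInf₂_le y hy, fun h => ?_⟩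
  exact le_antisymm (le_iInf₂ h) (iInf₂_le x hx)

theorem mem_nearest_of_subset (hST : S ⊆ T) (hx : x ∈ nearest G T u) (hxS : x ∈ S) :
    x ∈ nearest G S u :=
  mem_nearest_iff.mpr ⟨hxS, fun y hy => (mem_nearest_iff.mp hx).2 y (hST hy)⟩

theorem nearest_eq_of_edist_eq_add {u' : V} {d : ℕ∞} (hd : d ≠ ⊤)
    (h : ∀ y ∈ S, G.edist u y = d + G.edist u' y) : nearest G S u = nearest G S u' := by
  ext x
  simp only [mem_nearest_iff]
  refine and_congr_right fun hx => forall₂_congr fun y hy => ?_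
  rw [h x hx, h y hy]
  exact ENat.add_le_add_iff_left hd

end SimpleGraph

open SimpleGraph in
theorem left_inconsistent_H_notL_general {V : Type*} {k : ℕ}
    (G : SimpleGraph V) (c : V → Fin k) (i : Fin k) (A B : Set V) (v vj : V)
    (hconn : G.Connected)
    (hlaw : ∀ w ∈ A, ∀ x ∈ B, G.edist w x = G.edist w v + 1 + G.edist vj x)
    (S' S'' : Set V) (hS''B : S'' ⊆ B)
    (w : V) (hw : w ∈ A) (hci : c w = i)
    (hinc : ¬ ConsistentAt G c S' w)
    (hL'' : ¬ ∃ x ∈ nearest G S'' vj, c x = i) :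
    ¬ ConsistentAt G c (S' ∪ S'') w := by
  rintro ⟨x, hx, hcx⟩
  rcases hx.1 with hxS' | hxS''
  · exact hinc ⟨x, mem_nearest_of_subset Set.subset_union_left hx hxS', hcx⟩
  · have hfin : G.edist w v + 1 ≠ ⊤ := by
      simp [edist_ne_top_iff_reachable.mpr (hconn w v)]
    have hshift : nearest G S'' w = nearest G S'' vj :=
      nearest_eq_of_edist_eq_add hfin fun y hy => hlaw w hw y (hS''B hy)
    exact hL'' ⟨x, hshift ▸ mem_nearest_of_subset Set.subset_union_right hx hxS'', hci ▸ hcx⟩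

/-- Left inconsistency, case `i ∈ H'`, `i ∉ L''`. -/
theorem left_inconsistent_H_notL {V : Type*} {k : ℕ}
    (G : SimpleGraph V) (c : V → Fin k) (i : Fin k) (A B : Set V) (v vj : V)
    (hconn : G.Connected)
    (hv : v ∈ A) (hvj : vj ∈ B) (hdisj : Disjoint A B) (hcover : A ∪ B = Set.univ)
    (hlaw : ∀ w ∈ A, ∀ x ∈ B, G.edist w x = G.edist w v + 1 + G.edist vj x)
    (S' S'' : Set V) (hS'A : S' ⊆ A) (hS''B : S'' ⊆ B)
    (w : V) (hw : w ∈ A) (hci : c w = i)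
    (hinc : ¬ ConsistentAt G c S' w)
    (hL' : ¬ ∃ x ∈ nearest G S' w, c x = i)
    (hL'' : ¬ ∃ x ∈ nearest G S'' vj, c x = i) :
    ¬ ConsistentAt G c (S' ∪ S'') w :=
  left_inconsistent_H_notL_general G c i A B v vj hconn hlaw S' S'' hS''B w hw hci hinc hL''
end
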